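/- Main rank-increase result: Let A, C, Δ be real matrices as above with B = A + Δ, X = (A_S + Δ_S) C_Sᵀ, Y = Δ_⊥ C_⊥ᵀ, Z = (I − P) Y where P is the orthogonal projector onto col(X). Assume (i) ‖Δ‖₂ < σ_r(A) where r = rank(A); (ii) there exists an index set I with |I| = r such that the columns X_I form a basis of col(X); (iii) ‖X_I† P Y_I‖₂ < 1; (iv) there exists a disjoint index set K ⊆ {1,…,n} \ I with k := rank((I − P_{Z_I}) Z_K) ≥ 1, where P_{Z_I} projects onto col(Z_I). Then rank(B Cᵀ) ≥ r + k > r = rank(A Cᵀ). -/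

import Mathlib

open Matrix

noncomputable def specNorm {k l : Type} [Fintype k] [Fintype l] [DecidableEq l]
    (M : Matrix k l ℝ) : ℝ :=
  ‖LinearMap.toContinuousLinearMap (Matrix.toEuclideanLin M)‖

/-- The four Penrose conditions characterizing the Moore–Penrose pseudoinverse. -/
def IsMoorePenrose {k l : Type} [Fintype k] [Fintype l] (X : Matrix k l ℝ)
    (Xd : Matrix l k ℝ) : Prop :=
  X * Xd * X = X ∧ Xd * X * Xd = Xd ∧ (X * Xd)ᵀ = X * Xd ∧ (Xd * X)ᵀ = Xd * X

/-- `P` is the orthogonal projector onto the column space of `M`. -/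
def IsOrthProjOnto {k l : Type} [Fintype k] [Fintype l] (P : Matrix k k ℝ)
    (M : Matrix k l ℝ) : Prop :=
  P * P = P ∧ Pᵀ = P ∧ LinearMap.range P.mulVecLin = LinearMap.range M.mulVecLin

/-- `s` is a singular value of `A`: `s ≥ 0` and `s²` is an eigenvalue of `AᵀA`. -/
def IsSingularValue {m n : ℕ} (A : Matrix (Fin m) (Fin n) ℝ) (s : ℝ) : Prop :=
  0 ≤ s ∧ ∃ v : Fin n → ℝ, v ≠ 0 ∧ (Aᵀ * A).mulVec v = (s ^ 2) • v

/-- Smallest nonzero singular value. -/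
noncomputable def smallestNonzeroSV {m n : ℕ} (A : Matrix (Fin m) (Fin n) ℝ) : ℝ :=
  sInf {s | IsSingularValue A s ∧ s ≠ 0}

/-- Smallest singular value. -/
noncomputable def sigmaMin {m n : ℕ} (A : Matrix (Fin m) (Fin n) ℝ) : ℝ :=
  sInf {s | IsSingularValue A s}

/-- The column submatrix of `S` given by the column indices in `I`. -/
def colSub {m n : ℕ} (S : Matrix (Fin m) (Fin n) ℝ) (I : Finset (Fin n)) :
    Matrix (Fin m) {j // j ∈ I} ℝ :=
  Matrix.submatrix S id (fun j => (j : Fin n))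

open Module

lemma mrank_def {k l : Type} [Fintype k] [Fintype l] (M : Matrix k l ℝ) :
    Matrix.rank M = Module.finrank ℝ (LinearMap.range M.mulVecLin) := rfl

lemma eq_of_mulVec_eq {k l : Type} [Fintype l] [DecidableEq l] {M N : Matrix k l ℝ}
    (h : ∀ v, M *ᵥ v = N *ᵥ v) : M = N := by
  ext i j
  have := congrFun (h (Pi.single j 1)) i
  simpa using this

lemma proj_fix {p q : Type} [Fintype p] [Fintype q] [DecidableEq p] [DecidableEq q]
    {P : Matrix p p ℝ} {N : Matrix p q ℝ} (hPP : P * P = P)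
    (h : LinearMap.range N.mulVecLin ≤ LinearMap.range P.mulVecLin) : P * N = N := by
  apply eq_of_mulVec_eq
  intro v
  obtain ⟨u, hu⟩ := h (LinearMap.mem_range_self N.mulVecLin v)
  simp only [Matrix.mulVecLin_apply] at hu
  calc (P * N) *ᵥ v = P *ᵥ (N *ᵥ v) := by rw [Matrix.mulVec_mulVec]
    _ = P *ᵥ (P *ᵥ u) := by rw [hu]
    _ = (P * P) *ᵥ u := by rw [Matrix.mulVec_mulVec]
    _ = P *ᵥ u := by rw [hPP]
    _ = N *ᵥ v := hu

lemma proj_unique {p : Type} [Fintype p] [DecidableEq p] {P Q : Matrix p p ℝ}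
    (hP : P * P = P) (hPs : Pᵀ = P) (hQ : Q * Q = Q) (hQs : Qᵀ = Q)
    (h : LinearMap.range P.mulVecLin = LinearMap.range Q.mulVecLin) : P = Q := by
  have h1 : Q * P = P := proj_fix hQ h.le
  have h2 : P * Q = Q := proj_fix hP h.ge
  have h3 : (Q * P)ᵀ = Q := by rw [Matrix.transpose_mul, hPs, hQs, h2]
  calc P = Q * P := h1.symm
    _ = ((Q * P)ᵀ)ᵀ := by rw [Matrix.transpose_transpose]
    _ = Qᵀ := by rw [h3]
    _ = Q := hQs

lemma surj_one_add {l : Type} [Fintype l] [DecidableEq l] (N : Matrix l l ℝ)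
    (h : specNorm N < 1) : Function.Surjective (1 + N).mulVecLin := by
  apply LinearMap.surjective_of_injective
  rw [← LinearMap.ker_eq_bot, Matrix.ker_mulVecLin_eq_bot_iff]
  intro v hv
  by_contra hv0
  have hNv : N *ᵥ v = -v := by
    have : v + N *ᵥ v = 0 := by
      simpa [Matrix.add_mulVec, Matrix.one_mulVec] using hv
    linear_combination (norm := module) this
  set x : EuclideanSpace ℝ l := (WithLp.equiv 2 (l → ℝ)).symm v with hx
  have hxne : x ≠ 0 := by
    intro h0
    apply hv0
    have := congrArg (⇑(WithLp.equiv 2 (l → ℝ))) h0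
    simpa [hx] using this
  have hNx : Matrix.toEuclideanLin N x = -x := by
    rw [hx, WithLp.equiv_symm_apply, Matrix.toEuclideanLin_apply_piLp_toLp, hNv]
    rfl
  have hle : ‖x‖ ≤ specNorm N * ‖x‖ := by
    have h1 := (LinearMap.toContinuousLinearMap (Matrix.toEuclideanLin N)).le_opNorm x
    rw [show (LinearMap.toContinuousLinearMap (Matrix.toEuclideanLin N)) x
        = Matrix.toEuclideanLin N x from rfl, hNx, norm_neg] at h1
    exact h1
  have hxpos : 0 < ‖x‖ := norm_pos_iff.mpr hxne
  nlinarith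

lemma colSub_eq_mul {m n : ℕ} (S : Matrix (Fin m) (Fin n) ℝ) (I : Finset (Fin n)) :
    colSub S I = S * (1 : Matrix (Fin n) (Fin n) ℝ).submatrix (Equiv.refl (Fin n))
      (fun j : {j // j ∈ I} => (j : Fin n)) := by
  rw [Matrix.mul_submatrix_one]
  rfl

lemma mul_colSub {m p n : ℕ} (P : Matrix (Fin m) (Fin p) ℝ) (S : Matrix (Fin p) (Fin n) ℝ)
    (I : Finset (Fin n)) : P * colSub S I = colSub (P * S) I := by
  ext i j
  simp [colSub, Matrix.mul_apply]

lemma range_colSub_le {m n : ℕ} (S : Matrix (Fin m) (Fin n) ℝ) (I : Finset (Fin n)) :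
    LinearMap.range (colSub S I).mulVecLin ≤ LinearMap.range S.mulVecLin := by
  rw [colSub_eq_mul, Matrix.mulVecLin_mul]
  exact LinearMap.range_comp_le_range _ _

lemma rank_colSub_le {m n : ℕ} (S : Matrix (Fin m) (Fin n) ℝ) (I : Finset (Fin n)) :
    (colSub S I).rank ≤ S.rank := by
  rw [colSub_eq_mul]
  exact Matrix.rank_mul_le_left _ _

lemma colSub_add {m n : ℕ} (S T : Matrix (Fin m) (Fin n) ℝ) (I : Finset (Fin n)) :
    colSub (S + T) I = colSub S I + colSub T I := by
  ext i j; simp [colSub]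

lemma rank_mul_surj {p q : Type} [Fintype p] [Fintype q] [DecidableEq q]
    (A : Matrix p q ℝ) (T : Matrix q q ℝ) (hT : Function.Surjective T.mulVecLin) :
    (A * T).rank = A.rank := by
  rw [mrank_def, mrank_def, Matrix.mulVecLin_mul, LinearMap.range_comp,
    LinearMap.range_eq_top.mpr hT, Submodule.map_top]

set_option maxHeartbeats 1000000 in
set_option synthInstance.maxHeartbeats 400000 in
theorem stmt10 {m d n r s : ℕ} (A Δ B : Matrix (Fin m) (Fin d) ℝ) (hB : B = A + Δ)
    (C : Matrix (Fin n) (Fin d) ℝ) (hrank : A.rank = r)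
    (VS : Matrix (Fin d) (Fin r) ℝ) (Vp : Matrix (Fin d) (Fin s) ℝ)
    (h1 : VSᵀ * VS = 1) (h2 : Vpᵀ * Vp = 1) (h3 : VSᵀ * Vp = 0)
    (h4 : VS * VSᵀ + Vp * Vpᵀ = 1)
    (hspan : LinearMap.range VS.mulVecLin = LinearMap.range (Aᵀ).mulVecLin)
    (X Y Z : Matrix (Fin m) (Fin n) ℝ)
    (hX : X = (A * VS + Δ * VS) * (C * VS)ᵀ)
    (hY : Y = (Δ * Vp) * (C * Vp)ᵀ)
    (P : Matrix (Fin m) (Fin m) ℝ) (hP : IsOrthProjOnto P X)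
    (hZ : Z = (1 - P) * Y)
    -- assumption (i)
    (hi : specNorm Δ < smallestNonzeroSV A)
    -- assumption (ii): the columns of X indexed by I form a basis of col(X)
    (I : Finset (Fin n)) (hIcard : I.card = r)
    (hXIrank : (colSub X I).rank = r)
    (hXIspan : LinearMap.range (colSub X I).mulVecLin = LinearMap.range X.mulVecLin)
    -- assumption (iii)
    (Xd : Matrix {j // j ∈ I} (Fin m) ℝ) (hXd : IsMoorePenrose (colSub X I) Xd)
    (hiii : specNorm (Xd * (P * colSub Y I)) < 1)
    -- assumption (iv)
    (K : Finset (Fin n)) (hK : Disjoint I K)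
    (PZ : Matrix (Fin m) (Fin m) ℝ) (hPZ : IsOrthProjOnto PZ (colSub Z I))
    (k : ℕ) (hk : k = ((1 - PZ) * colSub Z K).rank) (hk1 : 1 ≤ k) :
    (B * Cᵀ).rank ≥ r + k ∧ r + k > r ∧ (A * Cᵀ).rank = r := by
  classical
  obtain ⟨hPP, hPs, hPrange⟩ := hP
  obtain ⟨hZPP, hZPs, hZPrange⟩ := hPZ
  obtain ⟨hd1, hd2, hd3, hd4⟩ := hXd
  have hVpVS : Vpᵀ * VS = 0 := by
    have := congrArg Matrix.transpose h3
    simpa using this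
  have hAVp : A * Vp = 0 := by
    have hVpA : Vpᵀ * Aᵀ = 0 := by
      apply eq_of_mulVec_eq
      intro v
      obtain ⟨u, hu⟩ := hspan.ge (LinearMap.mem_range_self (Aᵀ).mulVecLin v)
      simp only [Matrix.mulVecLin_apply] at hu
      calc (Vpᵀ * Aᵀ) *ᵥ v = Vpᵀ *ᵥ (Aᵀ *ᵥ v) := by rw [Matrix.mulVec_mulVec]
        _ = Vpᵀ *ᵥ (VS *ᵥ u) := by rw [hu]
        _ = (Vpᵀ * VS) *ᵥ u := by rw [Matrix.mulVec_mulVec]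
        _ = (0 : Matrix (Fin s) (Fin m) ℝ) *ᵥ v := by rw [hVpVS]; simp
    calc A * Vp = ((A * Vp)ᵀ)ᵀ := by rw [Matrix.transpose_transpose]
      _ = (Vpᵀ * Aᵀ)ᵀ := by rw [Matrix.transpose_mul]
      _ = 0 := by rw [hVpA]; simp
  -- B Cᵀ = X + Y
  have e2 : (A + Δ) * Vp = Δ * Vp := by rw [Matrix.add_mul, hAVp, zero_add]
  have hMXY : B * Cᵀ = X + Y := by
    calc B * Cᵀ = B * ((VS * VSᵀ + Vp * Vpᵀ) * Cᵀ) := by rw [h4, Matrix.one_mul]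
      _ = (B * VS) * (VSᵀ * Cᵀ) + (B * Vp) * (Vpᵀ * Cᵀ) := by
          simp only [Matrix.add_mul, Matrix.mul_add, Matrix.mul_assoc]
      _ = X + Y := by
          rw [hB, Matrix.add_mul A Δ VS, e2, hX, hY, Matrix.transpose_mul,
            Matrix.transpose_mul]
  -- P fixes X
  have hPX : P * X = X := proj_fix hPP hPrange.ge
  have hPXI : P * colSub X I = colSub X I := by rw [mul_colSub, hPX]
  -- P = XI * Xd
  have hXdIdem : (colSub X I * Xd) * (colSub X I * Xd) = colSub X I * Xd := by
    rw [← Matrix.mul_assoc, hd1]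
  have hrange1 : LinearMap.range (colSub X I * Xd).mulVecLin
      = LinearMap.range (colSub X I).mulVecLin := by
    apply le_antisymm
    · rw [Matrix.mulVecLin_mul]
      exact LinearMap.range_comp_le_range _ _
    · rintro x ⟨v, rfl⟩
      refine ⟨colSub X I *ᵥ v, ?_⟩
      simp only [Matrix.mulVecLin_apply, Matrix.mulVec_mulVec]
      rw [hd1]
  have hPeq : P = colSub X I * Xd :=
    proj_unique hPP hPs hXdIdem hd3 (by rw [hPrange, ← hXIspan, hrange1])
  -- P * MI = XI * T
  have hTsurj : Function.Surjective (1 + Xd * (P * colSub Y I)).mulVecLin :=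
    surj_one_add _ hiii
  have h5 : P * colSub Y I = colSub X I * (Xd * (P * colSub Y I)) := by
    calc P * colSub Y I = (P * P) * colSub Y I := by rw [hPP]
      _ = P * (P * colSub Y I) := by rw [Matrix.mul_assoc]
      _ = (colSub X I * Xd) * (P * colSub Y I) := by rw [← hPeq]
      _ = colSub X I * (Xd * (P * colSub Y I)) := by rw [Matrix.mul_assoc]
  have hPMI : P * colSub (X + Y) I = colSub X I * (1 + Xd * (P * colSub Y I)) := by
    calc P * colSub (X + Y) I = P * colSub X I + P * colSub Y I := by
          rw [colSub_add, Matrix.mul_add]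
      _ = colSub X I * (1 : Matrix {j // j ∈ I} {j // j ∈ I} ℝ) + colSub X I * (Xd * (P * colSub Y I)) := by
          rw [hPXI, ← h5, Matrix.mul_one]
      _ = colSub X I * (1 + Xd * (P * colSub Y I)) := by rw [Matrix.mul_add]
  have hrankMI : r ≤ (colSub (X + Y) I).rank := by
    calc r = (colSub X I).rank := hXIrank.symm
      _ = (colSub X I * (1 + Xd * (P * colSub Y I))).rank :=
          (rank_mul_surj _ _ hTsurj).symm
      _ = (P * colSub (X + Y) I).rank := by rw [hPMI]
      _ ≤ (colSub (X + Y) I).rank := Matrix.rank_mul_le_right _ _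
  -- Z facts
  have hZIYI : colSub Z I = (1 - P) * colSub Y I := by rw [hZ, mul_colSub]
  have hPZZI : PZ * colSub Z I = colSub Z I := proj_fix hZPP hZPrange.ge
  have h6 : (1 - P) * colSub (X + Y) I = colSub Z I := by
    rw [colSub_add, Matrix.mul_add, hZIYI, Matrix.sub_mul, Matrix.sub_mul,
      Matrix.one_mul, Matrix.one_mul, hPXI]
    abel
  have hQMI : ((1 - PZ) * (1 - P)) * colSub (X + Y) I = 0 := by
    rw [Matrix.mul_assoc, h6, Matrix.sub_mul, Matrix.one_mul, hPZZI, sub_self]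
  have hPXK : P * colSub X K = colSub X K := by rw [mul_colSub, hPX]
  have h7 : (1 - P) * colSub (X + Y) K = colSub Z K := by
    rw [hZ, ← mul_colSub, colSub_add, Matrix.mul_add, Matrix.sub_mul, Matrix.one_mul,
      hPXK, sub_self, zero_add]
  have hQMK : ((1 - PZ) * (1 - P)) * colSub (X + Y) K = (1 - PZ) * colSub Z K := by
    rw [Matrix.mul_assoc, h7]
  -- assemble the main inequality
  set q : (Fin m → ℝ) →ₗ[ℝ] (Fin m → ℝ) := ((1 - PZ) * (1 - P)).mulVecLin with hq
  set W : Submodule ℝ (Fin m → ℝ) :=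
    LinearMap.range (colSub (X + Y) I).mulVecLin
      ⊔ LinearMap.range (colSub (X + Y) K).mulVecLin with hW
  have hWle : W ≤ LinearMap.range (X + Y).mulVecLin :=
    sup_le (range_colSub_le _ _) (range_colSub_le _ _)
  have hUker : LinearMap.range (colSub (X + Y) I).mulVecLin ≤ LinearMap.ker q := by
    rintro x ⟨v, rfl⟩
    simp only [LinearMap.mem_ker, hq, Matrix.mulVecLin_apply, Matrix.mulVec_mulVec, hQMI]
    simp
  have hrn := LinearMap.finrank_range_add_finrank_ker (q.domRestrict W)
  have hr1 : k ≤ finrank ℝ (LinearMap.range (q.domRestrict W)) := by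
    rw [LinearMap.range_domRestrict]
    have hsub : LinearMap.range ((1 - PZ) * colSub Z K).mulVecLin
        ≤ W.map q := by
      rw [← hQMK, Matrix.mulVecLin_mul]
      rintro x ⟨v, rfl⟩
      exact ⟨(colSub (X + Y) K).mulVecLin v,
        Submodule.mem_sup_right (LinearMap.mem_range_self _ v), rfl⟩
    calc k = ((1 - PZ) * colSub Z K).rank := hk
      _ = finrank ℝ (LinearMap.range ((1 - PZ) * colSub Z K).mulVecLin) := mrank_def _
      _ ≤ finrank ℝ (W.map q) := Submodule.finrank_mono hsub
  have hr2 : r ≤ finrank ℝ (LinearMap.ker (q.domRestrict W)) := by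
    rw [LinearMap.ker_domRestrict]
    have hle2 : LinearMap.ker q ⊓ W ≤ W := inf_le_right
    have heq : finrank ℝ (Submodule.comap W.subtype (LinearMap.ker q ⊓ W))
        = finrank ℝ (LinearMap.ker q ⊓ W : Submodule ℝ (Fin m → ℝ)) :=
      LinearEquiv.finrank_eq (Submodule.comapSubtypeEquivOfLe hle2)
    have hcomap : Submodule.comap W.subtype (LinearMap.ker q)
        = Submodule.comap W.subtype (LinearMap.ker q ⊓ W) := by
      rw [Submodule.comap_inf, Submodule.comap_subtype_self, inf_top_eq]
    rw [hcomap, heq]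
    have hUle : LinearMap.range (colSub (X + Y) I).mulVecLin ≤ LinearMap.ker q ⊓ W :=
      le_inf hUker le_sup_left
    calc r ≤ (colSub (X + Y) I).rank := hrankMI
      _ = finrank ℝ (LinearMap.range (colSub (X + Y) I).mulVecLin) := mrank_def _
      _ ≤ finrank ℝ (LinearMap.ker q ⊓ W : Submodule ℝ (Fin m → ℝ)) :=
          Submodule.finrank_mono hUle
  refine ⟨?_, by omega, ?_⟩
  · calc r + k ≤ finrank ℝ (LinearMap.ker (q.domRestrict W))
        + finrank ℝ (LinearMap.range (q.domRestrict W)) := Nat.add_le_add hr2 hr1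
      _ = finrank ℝ W := by rw [Nat.add_comm]; exact hrn
      _ ≤ finrank ℝ (LinearMap.range (X + Y).mulVecLin) := Submodule.finrank_mono hWle
      _ = (X + Y).rank := (mrank_def _).symm
      _ = (B * Cᵀ).rank := by rw [hMXY]
  · -- rank (A Cᵀ) = r
    have hAVS : A = (A * VS) * VSᵀ := by
      calc A = A * (VS * VSᵀ + Vp * Vpᵀ) := by rw [h4, Matrix.mul_one]
        _ = A * VS * VSᵀ + A * Vp * Vpᵀ := by
            rw [Matrix.mul_add, ← Matrix.mul_assoc, ← Matrix.mul_assoc]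
        _ = (A * VS) * VSᵀ := by rw [hAVp, Matrix.zero_mul, add_zero]
    have hrankAVS : (A * VS).rank = r := by
      apply le_antisymm
      · calc (A * VS).rank ≤ A.rank := Matrix.rank_mul_le_left _ _
          _ = r := hrank
      · calc r = A.rank := hrank.symm
          _ = ((A * VS) * VSᵀ).rank := by rw [← hAVS]
          _ ≤ (A * VS).rank := Matrix.rank_mul_le_left _ _
    have hrankCS : ((C * VS)ᵀ).rank = r := by
      apply le_antisymm
      · exact (Matrix.rank_le_card_height _).trans (by simp)
      · calc r = (colSub X I).rank := hXIrank.symm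
          _ = ((A * VS + Δ * VS) * colSub ((C * VS)ᵀ) I).rank := by
              rw [hX, mul_colSub]
          _ ≤ (colSub ((C * VS)ᵀ) I).rank := Matrix.rank_mul_le_right _ _
          _ ≤ ((C * VS)ᵀ).rank := rank_colSub_le _ _
    have hsurjCS : Function.Surjective ((C * VS)ᵀ).mulVecLin := by
      rw [← LinearMap.range_eq_top]
      apply Submodule.eq_top_of_finrank_eq
      rw [← mrank_def, hrankCS]
      simp
    have hACt : A * Cᵀ = (A * VS) * (C * VS)ᵀ := by
      calc A * Cᵀ = ((A * VS) * VSᵀ) * Cᵀ := by rw [← hAVS]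
        _ = (A * VS) * (VSᵀ * Cᵀ) := by rw [Matrix.mul_assoc]
        _ = (A * VS) * (C * VS)ᵀ := by rw [Matrix.transpose_mul]
    rw [hACt, mrank_def, Matrix.mulVecLin_mul, LinearMap.range_comp,
      LinearMap.range_eq_top.mpr hsurjCS, Submodule.map_top, ← mrank_def, hrankAVS]
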